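/- arXiv:2010.11440 — 2 statements merged into one kernel-verified Lean document; each statement's English description precedes it below -/
import Mathlib

section
/- Let i be in {0,...,m-1} and let (i±2,i±1) denote either (i-2,i-1) or (i+2,i+1). For every w,w' in B_{i±2} ∪ A_{i±1}, the sets N(w) ∩ A_i and N(w') ∩ A_i are comparable under inclusion. Moreover, if w in B_{i±2} and w' in A_{i±1}, then N(w) ∩ A_i ⊆ N(w') ∩ A_i. -/
open SimpleGraph

/-- `c` is a hole (induced cycle on at least 5 vertices) in `G`:
the images of consecutive indices are adjacent, and these are the only adjacencies. -/
def IsHoleEmb {V : Type*} (G : SimpleGraph V) (n : ℕ) (c : ZMod n → V) : Prop :=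
  5 ≤ n ∧ Function.Injective c ∧
    ∀ i j : ZMod n, G.Adj (c i) (c j) ↔ (j = i + 1 ∨ i = j + 1)

/-- The triangle `K₃`. -/
def graphK3 : SimpleGraph (Fin 3) := ⊤

/-- `T₂`: the star `K_{1,3}` with every edge subdivided once. -/
def graphT2 : SimpleGraph (Fin 7) :=
  SimpleGraph.fromRel (fun i j =>
    (i, j) ∈ [((0 : Fin 7), (1 : Fin 7)), (0, 2), (0, 3), (1, 4), (2, 5), (3, 6)])

/-- `X₂`: a 4-cycle `0 1 2 3` with pendant vertices `4, 5, 6` attached at `0, 1, 2`. -/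
def graphX2 : SimpleGraph (Fin 7) :=
  SimpleGraph.fromRel (fun i j =>
    (i, j) ∈ [((0 : Fin 7), (1 : Fin 7)), (1, 2), (2, 3), (3, 0), (0, 4), (1, 5), (2, 6)])

/-- `X₃`: a path `0 1 2 3 4`, a vertex `5` adjacent to `0, 2, 4`, and a pendant `6` at `5`. -/
def graphX3 : SimpleGraph (Fin 7) :=
  SimpleGraph.fromRel (fun i j =>
    (i, j) ∈ [((0 : Fin 7), (1 : Fin 7)), (1, 2), (2, 3), (3, 4), (5, 0), (5, 2), (5, 4), (5, 6)])

/-- The cycle `C_n` on `ZMod n`. -/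
def cycleG (n : ℕ) : SimpleGraph (ZMod n) :=
  SimpleGraph.fromRel (fun i j => j = i + 1)

/-- `G` contains an induced copy of `H`. -/
def ContainsInduced {W V : Type*} (H : SimpleGraph W) (G : SimpleGraph V) : Prop :=
  Nonempty (H ↪g G)

/-- An almost bipartite permutation graph: no induced `K₃`, `T₂`, `X₂`, `X₃`,
nor `C_k` for `k ∈ {5,…,9}`. -/
def AlmostBPG {V : Type*} (G : SimpleGraph V) : Prop :=
  ¬ ContainsInduced graphK3 G ∧ ¬ ContainsInduced graphT2 G ∧
    ¬ ContainsInduced graphX2 G ∧ ¬ ContainsInduced graphX3 G ∧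
    ∀ k : ℕ, 5 ≤ k → k ≤ 9 → ¬ ContainsInduced (cycleG k) G

/-- `c` is a shortest hole in `G`. -/
def ShortestHole {V : Type*} (G : SimpleGraph V) (m : ℕ) (c : ZMod m → V) : Prop :=
  IsHoleEmb G m c ∧ ∀ (n : ℕ) (c' : ZMod n → V), IsHoleEmb G n c' → m ≤ n

/-- `A_i = {v : N(v) ∩ C = {c_{i-1}, c_{i+1}}}`. -/
def Ai {V : Type*} (G : SimpleGraph V) (m : ℕ) (c : ZMod m → V) (i : ZMod m) : Set V :=
  {v | G.neighborSet v ∩ Set.range c = {c (i - 1), c (i + 1)}}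

/-- `B_i = {v : N(v) ∩ C = {c_i}}`. -/
def Bi {V : Type*} (G : SimpleGraph V) (m : ℕ) (c : ZMod m → V) (i : ZMod m) : Set V :=
  {v | G.neighborSet v ∩ Set.range c = {c i}}

/-- `A[i,j] = A_i ∪ B_{i+1} ∪ A_{i+2} ∪ …` for integers `i ≤ j`. -/
def Ablk {V : Type*} (G : SimpleGraph V) (m : ℕ) (c : ZMod m → V) (i j : ℤ) : Set V :=
  {v | ∃ k : ℤ, i ≤ k ∧ k ≤ j ∧
    ((Even (k - i) ∧ v ∈ Ai G m c (k : ZMod m)) ∨ (Odd (k - i) ∧ v ∈ Bi G m c (k : ZMod m)))}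

/-- `B[i,j] = B_i ∪ A_{i+1} ∪ B_{i+2} ∪ …` for integers `i ≤ j`. -/
def Bblk {V : Type*} (G : SimpleGraph V) (m : ℕ) (c : ZMod m → V) (i j : ℤ) : Set V :=
  {v | ∃ k : ℤ, i ≤ k ∧ k ≤ j ∧
    ((Even (k - i) ∧ v ∈ Bi G m c (k : ZMod m)) ∨ (Odd (k - i) ∧ v ∈ Ai G m c (k : ZMod m)))}

/-- `V[i,j] = A[i,j] ∪ B[i,j]`. -/
def Vblk {V : Type*} (G : SimpleGraph V) (m : ℕ) (c : ZMod m → V) (i j : ℤ) : Set V :=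
  Ablk G m c i j ∪ Bblk G m c i j

/-- The relation `<_{A_i}`. -/
def ltA {V : Type*} (G : SimpleGraph V) (m : ℕ) (c : ZMod m → V) (i : ZMod m)
    (u u' : V) : Prop :=
  (∃ w ∈ Bi G m c (i - 2) ∪ Ai G m c (i - 1), G.Adj w u ∧ ¬ G.Adj w u') ∨
  (∃ w ∈ Ai G m c (i + 1) ∪ Bi G m c (i + 2), G.Adj w u' ∧ ¬ G.Adj w u)

/-- The relation `<_{B_i}`. -/
def ltB {V : Type*} (G : SimpleGraph V) (m : ℕ) (c : ZMod m → V) (i : ZMod m)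
    (w w' : V) : Prop :=
  (∃ u ∈ Ai G m c (i - 2) ∪ Bi G m c (i - 1), G.Adj u w ∧ ¬ G.Adj u w') ∨
  (∃ u ∈ Bi G m c (i + 1) ∪ Ai G m c (i + 2), G.Adj u w' ∧ ¬ G.Adj u w)

/-- `r` is a strict linear order on the set `S`. -/
def IsStrictLinearOrderOn {V : Type*} (S : Set V) (r : V → V → Prop) : Prop :=
  (∀ a ∈ S, ¬ r a a) ∧
    (∀ a ∈ S, ∀ b ∈ S, ∀ d ∈ S, r a b → r b d → r a d) ∧
    (∀ a ∈ S, ∀ b ∈ S, a ≠ b → r a b ∨ r b a)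

/-- `L` extends `r` on the set `S`. -/
def ExtendsOn {V : Type*} (S : Set V) (r L : V → V → Prop) : Prop :=
  ∀ a ∈ S, ∀ b ∈ S, r a b → L a b

/-- `v` is the maximum of `(S, L)`. -/
def IsMaxOf {V : Type*} (S : Set V) (L : V → V → Prop) (v : V) : Prop :=
  v ∈ S ∧ ∀ z ∈ S, z ≠ v → L z v

/-- `v` is the minimum of `(S, L)`. -/
def IsMinOf {V : Type*} (S : Set V) (L : V → V → Prop) (v : V) : Prop :=
  v ∈ S ∧ ∀ z ∈ S, z ≠ v → L v z

/-- `v, v'` belong to `S`, `L v v'`, and they are consecutive in `(S, L)`. -/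
def ConsecIn {V : Type*} (S : Set V) (L : V → V → Prop) (v v' : V) : Prop :=
  v ∈ S ∧ v' ∈ S ∧ L v v' ∧ ¬ ∃ z ∈ S, L v z ∧ L z v'

/-- The relation `≺` built from the chosen linear orders `LA i` on `A_i` and `LB i` on `B_i`. -/
def precRel {V : Type*} (G : SimpleGraph V) (m : ℕ) (c : ZMod m → V)
    (LA LB : ZMod m → V → V → Prop) (v v' : V) : Prop :=
  ∃ i : ZMod m,
    ConsecIn (Ai G m c i) (LA i) v v' ∨
    ConsecIn (Bi G m c i) (LB i) v v' ∨
    (IsMaxOf (Ai G m c i) (LA i) v ∧ IsMinOf (Bi G m c (i + 1)) (LB (i + 1)) v') ∨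
    (IsMaxOf (Bi G m c i) (LB i) v ∧ IsMinOf (Ai G m c (i + 1)) (LA (i + 1)) v')

/-- `<_{V'}`: the transitive closure of `≺` restricted to `V'`. -/
def ltOn {V : Type*} (G : SimpleGraph V) (m : ℕ) (c : ZMod m → V)
    (LA LB : ZMod m → V → V → Prop) (V' : Set V) : V → V → Prop :=
  Relation.TransGen (fun a b => a ∈ V' ∧ b ∈ V' ∧ precRel G m c LA LB a b)

/-- The relation `<_cl`. -/
def ltCl {V : Type*} (G : SimpleGraph V) (m : ℕ) (c : ZMod m → V)
    (LA LB : ZMod m → V → V → Prop) (v v' : V) : Prop :=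
  ∃ i : ℕ, i < m ∧
    ((v ∈ Ablk G m c ((i : ℤ) - 2) ((i : ℤ) + 2) ∧ v' ∈ Ablk G m c ((i : ℤ) - 2) ((i : ℤ) + 2) ∧
        ltOn G m c LA LB (Ablk G m c ((i : ℤ) - 2) ((i : ℤ) + 2)) v v') ∨
      (v ∈ Bblk G m c ((i : ℤ) - 2) ((i : ℤ) + 2) ∧ v' ∈ Bblk G m c ((i : ℤ) - 2) ((i : ℤ) + 2) ∧
        ltOn G m c LA LB (Bblk G m c ((i : ℤ) - 2) ((i : ℤ) + 2)) v v'))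

/-- `r` is a transitive orientation of `G`. -/
def IsTransOrient {V : Type*} (G : SimpleGraph V) (r : V → V → Prop) : Prop :=
  (∀ v, ¬ r v v) ∧ (∀ a b d, r a b → r b d → r a d) ∧
    ∀ u v, u ≠ v → ((r u v ∨ r v u) ↔ G.Adj u v)

/-- A permutation graph: both `G` and its complement admit transitive orientations. -/
def IsPermGraph {V : Type*} (G : SimpleGraph V) : Prop :=
  (∃ r, IsTransOrient G r) ∧ ∃ r, IsTransOrient Gᶜ r

/-- A bipartite permutation graph. -/
def IsBPG {V : Type*} (G : SimpleGraph V) : Prop :=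
  G.Colorable 2 ∧ IsPermGraph G

/-- `X` is a hole cut of `G`: `G - X` is a bipartite permutation graph. -/
def IsHoleCut {V : Type*} (G : SimpleGraph V) (X : Set V) : Prop :=
  IsBPG (G.induce Xᶜ)

/-- The adjacency property: for every `u ∈ U`, `N(u)` consists of vertices
consecutive in `(W, r)`. -/
def AdjProperty {V : Type*} (G : SimpleGraph V) (U W : Set V) (r : V → V → Prop) : Prop :=
  ∀ u ∈ U, ∀ w ∈ W, ∀ w' ∈ W, ∀ w'' ∈ W,
    r w w' → r w' w'' → G.Adj u w → G.Adj u w'' → G.Adj u w'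

/-- The enclosure property: for `u, u' ∈ U` with `N(u) ⊆ N(u')`, the set `N(u') \ N(u)`
consists of vertices consecutive in `(W, r)`. -/
def EncProperty {V : Type*} (G : SimpleGraph V) (U W : Set V) (r : V → V → Prop) : Prop :=
  ∀ u ∈ U, ∀ u' ∈ U, G.neighborSet u ∩ W ⊆ G.neighborSet u' ∩ W →
    ∀ w ∈ W, ∀ w' ∈ W, ∀ w'' ∈ W, r w w' → r w' w'' →
      (G.Adj u' w ∧ ¬ G.Adj u w) → (G.Adj u' w'' ∧ ¬ G.Adj u w'') →
        (G.Adj u' w' ∧ ¬ G.Adj u w')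

/-- `(U, rU)` and `(W, rW)` form a strong ordering of `U ∪ W`. -/
def StrongOrdering {V : Type*} (G : SimpleGraph V) (U W : Set V)
    (rU rW : V → V → Prop) : Prop :=
  ∀ u ∈ U, ∀ u' ∈ U, ∀ w ∈ W, ∀ w' ∈ W,
    G.Adj u w' → G.Adj u' w → rU u u' → rW w w' → G.Adj u w ∧ G.Adj u' w'

/-- `S` induces in `G` one of the graphs `K₃, T₂, X₂, X₃, C₅, …, C₉`. -/
def IsForbiddenSet {V : Type*} (G : SimpleGraph V) (S : Set V) : Prop :=
  Nonempty (graphK3 ≃g G.induce S) ∨ Nonempty (graphT2 ≃g G.induce S) ∨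
    Nonempty (graphX2 ≃g G.induce S) ∨ Nonempty (graphX3 ≃g G.induce S) ∨
    ∃ k : ℕ, 5 ≤ k ∧ k ≤ 9 ∧ Nonempty (cycleG k ≃g G.induce S)

/-! Around `c_i` the hole is the induced path `c_{i-2} c_{i-1} c_i c_{i+1} c_{i+2}`, and each vertex
of `A_i`, `B_{i+2}` or `A_{i+1}` is attached to this path in a fixed pattern. If two vertices of
`B_{i+2} ∪ A_{i+1}` had crossing neighbourhoods in `A_i`, or a vertex of `A_{i+1}` missed a
neighbour in `A_i` of a vertex of `B_{i+2}`, then these vertices together with the path would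
induce a `C₆` or an `X₃` (the needed non-adjacencies among them come from triangle-freeness).
The case `(i-2, i-1)` is the same argument on the reversed path. -/
section

variable {V : Type*} {G : SimpleGraph V}

instance (n : ℕ) : DecidableRel (cycleG n).Adj := inferInstanceAs (DecidableRel (fromRel _).Adj)

instance : DecidableRel graphX3.Adj := inferInstanceAs (DecidableRel (fromRel _).Adj)

theorem containsInduced_of_adj_iff {W : Type*} (H : SimpleGraph W)
    (hH : ∀ a b, a ≠ b → ∃ x, ¬(H.Adj a x ↔ H.Adj b x)) (f : W → V)
    (hf : ∀ a b, G.Adj (f a) (f b) ↔ H.Adj a b) : ContainsInduced H G := by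
  refine ⟨⟨⟨f, fun a b hab => by_contra fun hne => ?_⟩, hf _ _⟩⟩
  obtain ⟨x, hx⟩ := hH a b hne
  exact hx (by rw [← hf, ← hf, hab])

theorem Set.subset_or_subset_of_forall_mem {α : Type*} {X Y : Set α}
    (h : ∀ x ∈ X, ∀ y ∈ Y, x ∉ Y → y ∈ X) : X ⊆ Y ∨ Y ⊆ X := by
  by_contra! hXY
  obtain ⟨x, hx, hxY⟩ := Set.not_subset.mp hXY.1
  obtain ⟨y, hy, hyX⟩ := Set.not_subset.mp hXY.2
  exact hyX (h x hx y hy hxY)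

theorem ZMod.natCast_eq_natCast_iff_of_lt {m a b : ℕ} (ha : a < m) (hb : b < m) :
    (a : ZMod m) = b ↔ a = b := by
  rw [ZMod.natCast_eq_natCast_iff', Nat.mod_eq_of_lt ha, Nat.mod_eq_of_lt hb]

namespace AlmostBPG

theorem cliqueFree_three (hG : AlmostBPG G) : G.CliqueFree 3 := by
  by_contra h
  exact hG.1 ⟨topEmbeddingOfNotCliqueFree h⟩

theorem not_adj_of_adj_of_adj (hG : AlmostBPG G) {x a b : V} (ha : G.Adj x a)
    (hb : G.Adj x b) : ¬ G.Adj a b := by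
  classical
  exact fun hab => hG.cliqueFree_three {x, a, b} (is3Clique_triple_iff.mpr ⟨ha, hb, hab⟩)

theorem not_isSixCycle (hG : AlmostBPG G) (f : Fin 6 → V) :
    ¬ ∀ a b, G.Adj (f a) (f b) ↔ a ≠ b ∧ (b = a + 1 ∨ a = b + 1) := fun hf =>
  hG.2.2.2.2 6 (by norm_num) (by norm_num) (containsInduced_of_adj_iff (cycleG 6)
    (by decide) f hf)

theorem not_isX3 (hG : AlmostBPG G) (f : Fin 7 → V) :
    ¬ ∀ a b, G.Adj (f a) (f b) ↔ graphX3.Adj a b := fun hf =>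
  hG.2.2.2.1 (containsInduced_of_adj_iff graphX3 (by decide) f hf)

section Window

/- Throughout, `P 0, …, P 4` is an induced path (later `c_{i-2}, …, c_{i+2}`). The vertices of
`A_i` see exactly `P 1, P 3`; an *end* (a vertex of `B_{i+2}`) sees only `P 4`; a *fork* (a vertex
of `A_{i+1}`) sees exactly `P 2, P 4`. -/

variable {P : ℕ → V} {u u' w w' : V}

theorem adj_of_end_adj (hG : AlmostBPG G)
    (hP : ∀ a < 5, ∀ b < 5, G.Adj (P a) (P b) ↔ b = a + 1 ∨ a = b + 1)
    (hu : ∀ k < 5, G.Adj u (P k) ↔ k = 1 ∨ k = 3) (hw : ∀ k < 5, G.Adj w (P k) ↔ k = 4)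
    (hw' : ∀ k < 5, G.Adj w' (P k) ↔ k = 2 ∨ k = 4) (hwu : G.Adj w u) : G.Adj w' u := by
  by_contra hw'u
  have hww' : ¬ G.Adj w w' :=
    hG.not_adj_of_adj_of_adj (x := P 4) (by simp [G.adj_comm, hw]) (by simp [G.adj_comm, hw'])
  refine hG.not_isSixCycle ![u, w, P 4, w', P 2, P 1] fun a b => ?_
  fin_cases a <;> fin_cases b <;> simp_all [G.adj_comm]

theorem end_nbrs_noncrossing (hG : AlmostBPG G)
    (hP : ∀ a < 5, ∀ b < 5, G.Adj (P a) (P b) ↔ b = a + 1 ∨ a = b + 1)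
    (hu : ∀ k < 5, G.Adj u (P k) ↔ k = 1 ∨ k = 3) (hu' : ∀ k < 5, G.Adj u' (P k) ↔ k = 1 ∨ k = 3)
    (hw : ∀ k < 5, G.Adj w (P k) ↔ k = 4) (hw' : ∀ k < 5, G.Adj w' (P k) ↔ k = 4)
    (hwu : G.Adj w u) (hw'u' : G.Adj w' u') (hwu' : ¬ G.Adj w u') : G.Adj w' u := by
  by_contra hw'u
  have huu' : ¬ G.Adj u u' :=
    hG.not_adj_of_adj_of_adj (x := P 1) (by simp [G.adj_comm, hu]) (by simp [G.adj_comm, hu'])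
  have hww' : ¬ G.Adj w w' :=
    hG.not_adj_of_adj_of_adj (x := P 4) (by simp [G.adj_comm, hw]) (by simp [G.adj_comm, hw'])
  refine hG.not_isSixCycle ![u, w, P 4, w', u', P 1] fun a b => ?_
  fin_cases a <;> fin_cases b <;> simp_all [G.adj_comm]

theorem fork_nbrs_noncrossing (hG : AlmostBPG G)
    (hP : ∀ a < 5, ∀ b < 5, G.Adj (P a) (P b) ↔ b = a + 1 ∨ a = b + 1)
    (hu : ∀ k < 5, G.Adj u (P k) ↔ k = 1 ∨ k = 3) (hu' : ∀ k < 5, G.Adj u' (P k) ↔ k = 1 ∨ k = 3)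
    (hw : ∀ k < 5, G.Adj w (P k) ↔ k = 2 ∨ k = 4) (hw' : ∀ k < 5, G.Adj w' (P k) ↔ k = 2 ∨ k = 4)
    (hwu : G.Adj w u) (hw'u' : G.Adj w' u') (hwu' : ¬ G.Adj w u') : G.Adj w' u := by
  by_contra hw'u
  have huu' : ¬ G.Adj u u' :=
    hG.not_adj_of_adj_of_adj (x := P 1) (by simp [G.adj_comm, hu]) (by simp [G.adj_comm, hu'])
  have hww' : ¬ G.Adj w w' :=
    hG.not_adj_of_adj_of_adj (x := P 2) (by simp [G.adj_comm, hw]) (by simp [G.adj_comm, hw'])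
  refine hG.not_isX3 ![u, w, P 2, w', u', P 1, P 0] fun a b => ?_
  fin_cases a <;> fin_cases b <;> simp_all [G.adj_comm, graphX3, fromRel_adj]

theorem nbrs_comparable_of_window (hG : AlmostBPG G)
    (hP : ∀ a < 5, ∀ b < 5, G.Adj (P a) (P b) ↔ b = a + 1 ∨ a = b + 1) {U B A : Set V}
    (hU : ∀ u ∈ U, ∀ k < 5, G.Adj u (P k) ↔ k = 1 ∨ k = 3)
    (hB : ∀ w ∈ B, ∀ k < 5, G.Adj w (P k) ↔ k = 4)
    (hA : ∀ w ∈ A, ∀ k < 5, G.Adj w (P k) ↔ k = 2 ∨ k = 4) :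
    (∀ w ∈ B ∪ A, ∀ w' ∈ B ∪ A,
      G.neighborSet w ∩ U ⊆ G.neighborSet w' ∩ U ∨ G.neighborSet w' ∩ U ⊆ G.neighborSet w ∩ U) ∧
      ∀ w ∈ B, ∀ w' ∈ A, G.neighborSet w ∩ U ⊆ G.neighborSet w' ∩ U := by
  have nested : ∀ w ∈ B, ∀ w' ∈ A, G.neighborSet w ∩ U ⊆ G.neighborSet w' ∩ U :=
    fun w hw w' hw' u ⟨hwu, hu⟩ => ⟨hG.adj_of_end_adj hP (hU u hu) (hB w hw) (hA w' hw') hwu, hu⟩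
  refine ⟨fun w hw w' hw' => Set.subset_or_subset_of_forall_mem ?_, nested⟩
  rintro u ⟨hwu, hu⟩ u' ⟨hw'u', hu'⟩ hu'w
  replace hu'w : ¬ G.Adj w' u := fun h => hu'w ⟨h, hu⟩
  refine ⟨?_, hu'⟩
  rcases hw with hw | hw <;> rcases hw' with hw' | hw'
  · exact hG.end_nbrs_noncrossing hP (hU u' hu') (hU u hu) (hB w' hw') (hB w hw) hw'u' hwu hu'w
  · exact absurd (nested w hw w' hw' ⟨hwu, hu⟩).1 hu'w
  · exact (nested w' hw' w hw ⟨hw'u', hu'⟩).1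
  · exact hG.fork_nbrs_noncrossing hP (hU u' hu') (hU u hu) (hA w' hw') (hA w hw) hw'u' hwu hu'w

end Window

end AlmostBPG

section Hole

variable {m : ℕ} {c : ZMod m → V} {i j : ZMod m} {u : V}

theorem adj_iff_of_mem_Ai (hinj : Function.Injective c) (hu : u ∈ Ai G m c i) (x : ZMod m) :
    G.Adj u (c x) ↔ x = i - 1 ∨ x = i + 1 := by
  simpa [hinj.eq_iff] using Set.ext_iff.mp hu (c x)

theorem adj_iff_of_mem_Bi (hinj : Function.Injective c) (hu : u ∈ Bi G m c i) (x : ZMod m) :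
    G.Adj u (c x) ↔ x = i := by
  simpa [hinj.eq_iff] using Set.ext_iff.mp hu (c x)

theorem add_natCast_eq_add_natCast_iff (j : ZMod m) {a b : ℕ} (ha : a < m) (hb : b < m) :
    j + a = j + b ↔ a = b :=
  (add_right_inj j).trans (ZMod.natCast_eq_natCast_iff_of_lt ha hb)

theorem IsHoleEmb.adj_add_iff (hc : IsHoleEmb G m c) (j : ZMod m) {a b : ℕ} (ha : a + 1 < m)
    (hb : b + 1 < m) : G.Adj (c (j + a)) (c (j + b)) ↔ b = a + 1 ∨ a = b + 1 := by
  rw [hc.2.2, add_assoc, add_assoc, ← Nat.cast_succ, ← Nat.cast_succ,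
    add_natCast_eq_add_natCast_iff j (by omega) ha, add_natCast_eq_add_natCast_iff j (by omega) hb]

theorem adj_add_iff_of_mem_Ai (hinj : Function.Injective c) (hu : u ∈ Ai G m c i) {a k : ℕ}
    (hi : i = j + a + 1) (ha : a + 2 < m) (hk : k < m) :
    G.Adj u (c (j + k)) ↔ k = a ∨ k = a + 2 := by
  have hi' : i + 1 = j + (a + 2 : ℕ) := by rw [hi]; push_cast; ring
  rw [adj_iff_of_mem_Ai hinj hu, hi', hi, add_sub_cancel_right,
    add_natCast_eq_add_natCast_iff j hk (by omega), add_natCast_eq_add_natCast_iff j hk ha]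

theorem adj_add_iff_of_mem_Bi (hinj : Function.Injective c) (hu : u ∈ Bi G m c i) {a k : ℕ}
    (hi : i = j + a) (ha : a < m) (hk : k < m) : G.Adj u (c (j + k)) ↔ k = a := by
  rw [adj_iff_of_mem_Bi hinj hu, hi, add_natCast_eq_add_natCast_iff j hk ha]

end Hole

end

theorem neighborhoods_in_Ai_comparable_general {V : Type*} (G : SimpleGraph V) (hG : AlmostBPG G)
    (m : ℕ) (c : ZMod m → V) (hm : 10 ≤ m) (hC : ShortestHole G m c)
    (i p q : ZMod m)
    (hpq : (p = i - 2 ∧ q = i - 1) ∨ (p = i + 2 ∧ q = i + 1)) :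
    (∀ w ∈ Bi G m c p ∪ Ai G m c q, ∀ w' ∈ Bi G m c p ∪ Ai G m c q,
      G.neighborSet w ∩ Ai G m c i ⊆ G.neighborSet w' ∩ Ai G m c i ∨
        G.neighborSet w' ∩ Ai G m c i ⊆ G.neighborSet w ∩ Ai G m c i) ∧
      ∀ w ∈ Bi G m c p, ∀ w' ∈ Ai G m c q,
        G.neighborSet w ∩ Ai G m c i ⊆ G.neighborSet w' ∩ Ai G m c i := by
  have hinj := hC.1.2.1
  have hP (a : ℕ) (ha : a < 5) (b : ℕ) (hb : b < 5) :
      G.Adj (c (i - 2 + a)) (c (i - 2 + b)) ↔ b = a + 1 ∨ a = b + 1 :=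
    hC.1.adj_add_iff _ (by omega) (by omega)
  have hU (u : V) (hu : u ∈ Ai G m c i) (k : ℕ) (hk : k < 5) :
      G.Adj u (c (i - 2 + k)) ↔ k = 1 ∨ k = 3 :=
    adj_add_iff_of_mem_Ai hinj hu (by push_cast; ring) (by omega) (by omega)
  rcases hpq with ⟨rfl, rfl⟩ | ⟨rfl, rfl⟩
  · refine hG.nbrs_comparable_of_window (P := fun k => c (i - 2 + (4 - k : ℕ)))
      (fun a ha b hb => (hP _ (by omega) _ (by omega)).trans (by omega))
      (fun u hu k hk => (hU u hu _ (by omega)).trans (by omega))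
      (fun w hw k hk => (adj_add_iff_of_mem_Bi hinj hw (a := 0) (by simp) (by omega)
        (by omega)).trans (by omega))
      (fun w hw k hk => (adj_add_iff_of_mem_Ai hinj hw (a := 0) (by push_cast; ring) (by omega)
        (by omega)).trans (by omega))
  · exact hG.nbrs_comparable_of_window hP hU
      (fun w hw k hk => adj_add_iff_of_mem_Bi hinj hw (a := 4) (by push_cast; ring) (by omega)
        (by omega))
      (fun w hw k hk => adj_add_iff_of_mem_Ai hinj hw (a := 2) (by push_cast; ring) (by omega)
        (by omega))

theorem neighborhoods_in_Ai_comparable {V : Type*} (G : SimpleGraph V) (hconn : G.Connected) (hG : AlmostBPG G)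
    (m : ℕ) (c : ZMod m → V) (hm : 10 ≤ m) (hC : ShortestHole G m c)
    (i p q : ZMod m)
    (hpq : (p = i - 2 ∧ q = i - 1) ∨ (p = i + 2 ∧ q = i + 1)) :
    (∀ w ∈ Bi G m c p ∪ Ai G m c q, ∀ w' ∈ Bi G m c p ∪ Ai G m c q,
      G.neighborSet w ∩ Ai G m c i ⊆ G.neighborSet w' ∩ Ai G m c i ∨
        G.neighborSet w' ∩ Ai G m c i ⊆ G.neighborSet w ∩ Ai G m c i) ∧
      ∀ w ∈ Bi G m c p, ∀ w' ∈ Ai G m c q,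
        G.neighborSet w ∩ Ai G m c i ⊆ G.neighborSet w' ∩ Ai G m c i :=
  neighborhoods_in_Ai_comparable_general G hG m c hm hC i p q hpq
end

section
/- Let G=(U,W,E) be a connected bipartite graph with bipartition classes U and W. If linear orders (U,<_U) and (W,<_W) form a strong ordering of U ∪ W, then (W,<_W) satisfies the adjacency and enclosure properties, and symmetrically (U,<_U) satisfies the adjacency and enclosure properties (with the roles of U and W exchanged). -/
open SimpleGraph

theorem strong_ordering_implies_adjacency_enclosure {V : Type*} (G : SimpleGraph V)
    (hconn : G.Connected) (U W : Set V)
    (hcover : U ∪ W = Set.univ) (hdisj : Disjoint U W)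
    (hbip : ∀ u v : V, G.Adj u v → (u ∈ U ∧ v ∈ W) ∨ (u ∈ W ∧ v ∈ U))
    (rU rW : V → V → Prop)
    (hrU : IsStrictLinearOrderOn U rU) (hrW : IsStrictLinearOrderOn W rW)
    (hstrong : StrongOrdering G U W rU rW) :
    AdjProperty G U W rW ∧ EncProperty G U W rW ∧
      AdjProperty G W U rU ∧ EncProperty G W U rU := by
  have hUW : ∀ a, a ∈ U → a ∉ W := fun a ha => Set.disjoint_left.mp hdisj ha
  have hWU : ∀ a, a ∈ W → a ∉ U := fun a ha => Set.disjoint_right.mp hdisj ha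
  -- every vertex distinct from another has a neighbor
  have hnbr : ∀ a b : V, a ≠ b → ∃ x, G.Adj a x := by
    intro a b hab
    obtain ⟨w⟩ := hconn.preconnected a b
    cases w with
    | nil => exact absurd rfl hab
    | cons h' _ => exact ⟨_, h'⟩
  have hAdjW : AdjProperty G U W rW := by
    intro u hu w hw w' hw' w'' hw'' h1 h2 ha hc
    have hne : w ≠ w' := by rintro rfl; exact hrW.1 w hw h1
    obtain ⟨x, hx⟩ := hnbr w' w (fun h => hne h.symm)
    have hxU : x ∈ U := by
      rcases hbip w' x hx with ⟨h1', _⟩ | ⟨_, h2'⟩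
      · exact absurd hw' (hUW _ h1')
      · exact h2'
    by_cases hux : u = x
    · subst hux; exact hx.symm
    rcases hrU.2.2 u hu x hxU hux with h | h
    · exact (hstrong u hu x hxU w' hw' w'' hw'' hc hx.symm h h2).1
    · exact (hstrong x hxU u hu w hw w' hw' hx.symm ha h h1).2
  have hAdjU : AdjProperty G W U rU := by
    intro u hu w hw w' hw' w'' hw'' h1 h2 ha hc
    have hne : w ≠ w' := by rintro rfl; exact hrU.1 w hw h1
    obtain ⟨x, hx⟩ := hnbr w' w (fun h => hne h.symm)
    have hxW : x ∈ W := by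
      rcases hbip w' x hx with ⟨_, h2'⟩ | ⟨h1', _⟩
      · exact h2'
      · exact absurd hw' (hWU _ h1')
    have huW : u ∈ W := hu
    by_cases hux : u = x
    · subst hux; exact hx.symm
    rcases hrW.2.2 u huW x hxW hux with h | h
    · exact (hstrong w' hw' w'' hw'' u huW x hxW hx hc.symm h2 h).1.symm
    · exact (hstrong w hw w' hw' x hxW u huW ha.symm hx h1 h).2.symm
  refine ⟨hAdjW, ?_, hAdjU, ?_⟩
  · intro u hu u' hu' _ w hw w' hw' w'' hw'' h1 h2 ⟨ha, hna⟩ ⟨hc, hnc⟩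
    refine ⟨hAdjW u' hu' w hw w' hw' w'' hw'' h1 h2 ha hc, ?_⟩
    intro hadj
    have hne : u ≠ u' := by rintro rfl; exact hna ha
    rcases hrU.2.2 u hu u' hu' hne with h | h
    · exact hna (hstrong u hu u' hu' w hw w' hw' hadj ha h h1).1
    · exact hnc (hstrong u' hu' u hu w' hw' w'' hw'' hc hadj h h2).2
  · intro u hu u' hu' _ w hw w' hw' w'' hw'' h1 h2 ⟨ha, hna⟩ ⟨hc, hnc⟩
    refine ⟨hAdjU u' hu' w hw w' hw' w'' hw'' h1 h2 ha hc, ?_⟩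
    intro hadj
    have hne : u ≠ u' := by rintro rfl; exact hna ha
    rcases hrW.2.2 u hu u' hu' hne with h | h
    · exact hna (hstrong w hw w' hw' u hu u' hu' ha.symm hadj.symm h1 h).1.symm
    · exact hnc (hstrong w' hw' w'' hw'' u' hu' u hu hadj.symm hc.symm h2 h).2.symm
end
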